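/- Let 0 < α ≤ 1, β > 0 and t > 0. If f : [0,∞) → ℝ is differentiable at t in the classical sense, then f is α-differentiable at t in the sense of the local M-derivative and 𝒟_M^{α,β} f(t) = (t^{1−α} / Γ(β+1)) · f'(t). -/

import Mathlib

open Filter Topology

/-- One-parameter Mittag-Leffler function `E_β(x) = ∑_{k=0}^∞ x^k / Γ(βk+1)`. -/
noncomputable def mittagLeffler (β x : ℝ) : ℝ :=
  ∑' k : ℕ, x ^ k / Real.Gamma (β * k + 1)

/-- `f` has local M-derivative `L` of order `α` with parameter `β` at `t`, i.e.
`lim_{ε→0} (f (t · E_β (ε t^{-α})) - f t)/ε = L`. -/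
def HasLocalMDerivAt (α β : ℝ) (f : ℝ → ℝ) (t L : ℝ) : Prop :=
  Tendsto (fun ε : ℝ => (f (t * mittagLeffler β (ε * t ^ (-α))) - f t) / ε)
    (𝓝[≠] (0 : ℝ)) (𝓝 L)

/-!
`ε ↦ t · E_β(ε t^{-α})` equals `t` at `ε = 0`, and the local M-derivative is the derivative at
`ε = 0` of `f` composed with it. By the chain rule it is `f'(t) · t · E_β'(0) · t^{-α}`, and
`E_β'(0) = 1/Γ(β+1)` is the linear coefficient of the power series of `E_β`, whose radius of
convergence is positive because `Γ ≥ 1/2` on `[1, ∞)`.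
-/

/- `Γ` increases on `[2, ∞)` from `Γ 2 = 1`, and `Γ x = Γ (x + 1) / x` covers `[1, 2]`. -/
lemma Real.half_le_Gamma {x : ℝ} (hx : 1 ≤ x) : 1 / 2 ≤ Real.Gamma x := by
  have hmono := Real.Gamma_strictMonoOn_Ici.monotoneOn
  have hx0 : 0 < x := by linarith
  rcases le_total 2 x with h2 | h2
  · have := hmono Set.self_mem_Ici (Set.mem_Ici.mpr h2) h2
    rw [Real.Gamma_two] at this
    linarith
  · have hsucc : 1 ≤ Real.Gamma (x + 1) := by
      simpa [Real.Gamma_two] using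
        hmono Set.self_mem_Ici (Set.mem_Ici.mpr (by linarith)) (by linarith : (2 : ℝ) ≤ x + 1)
    rw [Real.Gamma_add_one hx0.ne'] at hsucc
    nlinarith [Real.Gamma_pos_of_pos hx0]

noncomputable def mittagLefflerSeries (β : ℝ) : FormalMultilinearSeries ℝ ℝ ℝ :=
  FormalMultilinearSeries.ofScalars ℝ fun k : ℕ => (Real.Gamma (β * k + 1))⁻¹

lemma mittagLeffler_eq_ofScalarsSum (β : ℝ) :
    mittagLeffler β = FormalMultilinearSeries.ofScalarsSum
      (E := ℝ) fun k : ℕ => (Real.Gamma (β * k + 1))⁻¹ := by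
  funext x
  rw [FormalMultilinearSeries.ofScalars_sum_eq, mittagLeffler]
  exact tsum_congr fun k => by rw [smul_eq_mul, div_eq_inv_mul]

lemma mittagLeffler_zero (β : ℝ) : mittagLeffler β 0 = 1 := by
  simp [mittagLeffler_eq_ofScalarsSum, FormalMultilinearSeries.ofScalarsSum_zero]

lemma one_le_radius_mittagLefflerSeries {β : ℝ} (hβ : 0 ≤ β) :
    1 ≤ (mittagLefflerSeries β).radius := by
  have hbound : ∀ n : ℕ, ‖mittagLefflerSeries β n‖ * 1 ^ n ≤ 2 := fun n => by
    have hΓ : 1 / 2 ≤ Real.Gamma (β * n + 1) :=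
      Real.half_le_Gamma (by nlinarith [(Nat.cast_nonneg n : (0 : ℝ) ≤ n)])
    rw [mittagLefflerSeries, FormalMultilinearSeries.ofScalars_norm, one_pow, mul_one,
      norm_inv, Real.norm_eq_abs, abs_of_pos (by linarith)]
    calc (Real.Gamma (β * n + 1))⁻¹ ≤ (1 / 2)⁻¹ := inv_anti₀ (by norm_num) hΓ
      _ = 2 := by norm_num
  simpa using
    (mittagLefflerSeries β).le_radius_of_bound 2 (r := 1) fun n => by simpa using hbound n

lemma hasFPowerSeriesAt_mittagLeffler {β : ℝ} (hβ : 0 ≤ β) :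
    HasFPowerSeriesAt (mittagLeffler β) (mittagLefflerSeries β) 0 := by
  rw [mittagLeffler_eq_ofScalarsSum]
  exact (FormalMultilinearSeries.hasFPowerSeriesOnBall _
    (zero_lt_one.trans_le (one_le_radius_mittagLefflerSeries hβ))).hasFPowerSeriesAt

lemma hasDerivAt_mittagLeffler_zero {β : ℝ} (hβ : 0 ≤ β) :
    HasDerivAt (mittagLeffler β) (Real.Gamma (β + 1))⁻¹ 0 := by
  refine (hasFPowerSeriesAt_mittagLeffler hβ).hasDerivAt.congr_deriv ?_
  simp [mittagLefflerSeries]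

lemma tendsto_slope_comp_mul_of_hasDerivAt {f E : ℝ → ℝ} {f' d t s : ℝ}
    (hf : HasDerivAt f f' t) (hE : HasDerivAt E d 0) (hE0 : E 0 = 1) :
    Tendsto (fun ε : ℝ => (f (t * E (ε * s)) - f t) / ε) (𝓝[≠] 0) (𝓝 (f' * (t * (d * s)))) := by
  have hinner : HasDerivAt (fun ε : ℝ => t * E (ε * s)) (t * (d * s)) 0 :=
    ((zero_mul s ▸ hE).comp 0 (hasDerivAt_mul_const s)).const_mul t
  have hcomp := ((by simpa [hE0] using hf : HasDerivAt f f' (t * E (0 * s)))).comp 0 hinner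
  refine (hasDerivAt_iff_tendsto_slope.mp hcomp).congr fun ε => ?_
  simp [slope_def_field, hE0]

theorem stmt5_general (α β t : ℝ) (hβ : 0 < β) (ht : 0 < t)
    (f : ℝ → ℝ) (f' : ℝ) (hf : HasDerivAt f f' t) :
    HasLocalMDerivAt α β f t (t ^ (1 - α) / Real.Gamma (β + 1) * f') := by
  have hlim := tendsto_slope_comp_mul_of_hasDerivAt (s := t ^ (-α)) hf
    (hasDerivAt_mittagLeffler_zero hβ.le) (mittagLeffler_zero β)
  have hpow : t * t ^ (-α) = t ^ (1 - α) := by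
    rw [sub_eq_add_neg, Real.rpow_add ht, Real.rpow_one]
  rw [HasLocalMDerivAt, ← hpow]
  convert hlim using 2
  ring

/-- if `f` is classically differentiable at `t > 0`, then it is
α-differentiable there and `𝒟_M^{α,β} f(t) = (t^{1-α}/Γ(β+1)) f'(t)`. -/
theorem stmt5 (α β t : ℝ) (hα0 : 0 < α) (hα1 : α ≤ 1) (hβ : 0 < β) (ht : 0 < t)
    (f : ℝ → ℝ) (f' : ℝ) (hf : HasDerivAt f f' t) :
    HasLocalMDerivAt α β f t (t ^ (1 - α) / Real.Gamma (β + 1) * f') :=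
  stmt5_general α β t hβ ht f f' hf
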